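/- For every MOn-1qfa A over Σ with m states, there exist row vectors ξ, η ∈ ℂ^{1×m²} and a family (P(c))_{c∈Σ} of m²×m² projectors (Hermitian idempotent matrices) such that ‖ξ‖ = 1, ‖η‖ ≤ √m, and ⟨ξ, (P(c))_{c∈Σ}, η⟩ is a linear representation of the acceptance-probability function p_A, i.e., p_A(w₁⋯w_n) = ξ P(w₁)⋯P(w_n) ηᵀ for every word w₁⋯w_n ∈ Σ*. -/

import Mathlib

/-!
Vectorising matrices turns the Lüders update `X ↦ ∑ⱼ Pⱼ X Pⱼ` into right multiplication by
the `m² × m²` matrix `∑ⱼ Pⱼ ⊗ₖ Pⱼᵀ`, which is a Hermitian idempotent because the `Pⱼ` are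
pairwise orthogonal projectors. With `ξ = vec σ(ε)` and `η = vec Mᵀ` for the accepting
projector `M = ∑_{j ∈ F} Pⱼ(#)`, the representation computes `tr (σ(w)ᵀ Mᵀ) = tr (M σ(w))`,
which equals `p_A(w)` and is real because `M` and `σ(w)` are Hermitian.
For a Hermitian idempotent `B` one has `‖vec B‖² = tr B`; hence `‖ξ‖² = tr σ(ε) = 1` and
`‖η‖² = tr M ≤ tr 1 = m`.
-/

open Matrix

/-- A Measure-Only one-way quantum finite automaton (MOn-1qfa) over the alphabet `σ`
(the letter `none` plays the role of the end-marker `#`).  The data consists of: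
the number of states `m`, for each letter `c` (and the end-marker) the number `k c`
of distinct eigenvalues of the observable `O_c`, the eigenvalues `eig c` themselves,
the corresponding orthogonal projectors `P c`, the initial (row) vector `init`,
and the set `F` of (indices of) accepting eigenvalues of the end-marker observable. -/
structure MOnQFA (σ : Type) where
  m : ℕ
  k : Option σ → ℕ
  eig : (c : Option σ) → Fin (k c) → ℝ
  P : (c : Option σ) → Fin (k c) → Matrix (Fin m) (Fin m) ℂ
  init : Matrix (Fin 1) (Fin m) ℂ
  F : Finset (Fin (k none))

namespace MOnQFA

variable {σ : Type}

/-- Well-formedness of a MOn-1qfa: the eigenvalues of each observable are distinct,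
the `P c j` are pairwise orthogonal Hermitian idempotents (orthogonal projectors)
summing to the identity (so that `O_c = ∑ j, eig c j • P c j` is a Hermitian matrix
with spectral decomposition given by the data), and the initial vector has norm 1. -/
def Valid (A : MOnQFA σ) : Prop :=
  (∀ c, Function.Injective (A.eig c)) ∧
  (∀ c j, (A.P c j)ᴴ = A.P c j) ∧
  (∀ c j, A.P c j * A.P c j = A.P c j) ∧
  (∀ c j j', j ≠ j' → A.P c j * A.P c j' = 0) ∧
  (∀ c, ∑ j, A.P c j = 1) ∧
  (∑ i, Complex.normSq (A.init 0 i) = 1)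

/-- The density matrix `σ(w)` reached after reading the word `w`:
`σ(ε) = π₀† π₀` and `σ(yc) = ∑ j, P_j(c) σ(y) P_j(c)`. -/
noncomputable def dens (A : MOnQFA σ) (w : List σ) : Matrix (Fin A.m) (Fin A.m) ℂ :=
  w.foldl (fun ρ c => ∑ j, A.P (some c) j * ρ * A.P (some c) j) (A.initᴴ * A.init)

/-- The acceptance probability `p_A(w) = Tr (∑_{j ∈ F} P_j(#) σ(w) P_j(#))`. -/
noncomputable def prob (A : MOnQFA σ) (w : List σ) : ℝ :=
  (Matrix.trace (∑ j ∈ A.F, A.P none j * A.dens w * A.P none j)).re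

end MOnQFA

/-- `LMO σ` : the class of languages recognized by some MOn-1qfa over `σ`
with an isolated cut-point. -/
def LMO (σ : Type) : Set (Set (List σ)) :=
  {L | ∃ A : MOnQFA σ, A.Valid ∧ ∃ lam δ : ℝ, 0 < lam ∧ 0 < δ ∧
        (∀ w, |A.prob w - lam| ≥ δ) ∧ L = {w | A.prob w > lam}}

/-- `PMO σ` : the class of probabilistic events induced by MOn-1qfas over `σ`. -/
def PMO (σ : Type) : Set (List σ → ℝ) :=
  {φ | ∃ A : MOnQFA σ, A.Valid ∧ φ = A.prob}

open scoped Kronecker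

namespace Matrix

variable {ι l n R : Type*}

-- `vec` stacks columns, so `vec X ᵥ* (B ⊗ₖ A) = vec (Aᵀ * X * B)`; hence the transpose.
def superop [Fintype ι] [Mul R] [AddCommMonoid R] (Q : ι → Matrix n n R) :
    Matrix (n × n) (n × n) R :=
  ∑ j, Q j ⊗ₖ (Q j)ᵀ

section CommSemiring

variable [Fintype n] [CommSemiring R]

theorem vec_vecMul_superop [Fintype ι] (Q : ι → Matrix n n R) (X : Matrix n n R) :
    vec X ᵥ* superop Q = vec (∑ j, Q j * X * Q j) := by
  simp only [superop, vecMul_sum, vec_vecMul_kronecker, transpose_transpose, vec_sum]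

theorem vec_vecMul_prod_map_superop [DecidableEq n] {σ : Type*} {ι : σ → Type*}
    [∀ c, Fintype (ι c)] (Q : (c : σ) → ι c → Matrix n n R) (w : List σ) (X : Matrix n n R) :
    vec X ᵥ* (w.map fun c => superop (Q c)).prod =
      vec (w.foldl (fun X c => ∑ j, Q c j * X * Q c j) X) := by
  induction w generalizing X with
  | nil => simp
  | cons c w ih =>
    rw [List.map_cons, List.prod_cons, ← vecMul_vecMul, vec_vecMul_superop, ih]
    rfl

theorem isIdempotentElem_superop [Fintype ι] [DecidableEq n] {Q : ι → Matrix n n R}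
    (hQ : OrthogonalIdempotents Q) : IsIdempotentElem (superop Q) := by
  classical
  simp only [IsIdempotentElem, superop, Finset.sum_mul_sum, ← mul_kronecker_mul,
    ← transpose_mul, hQ.mul_eq]
  refine Finset.sum_congr rfl fun i _ =>
    (Finset.sum_eq_single i (fun j _ hji => ?_) (by simp)).trans ?_
  · simp [hji, Ne.symm hji]
  · simp

theorem list_prod_map_submatrix_equiv [Fintype l] [DecidableEq l] [DecidableEq n] {σ : Type*}
    (P : σ → Matrix n n R) (e : l ≃ n) (w : List σ) :
    (w.map fun c => (P c).submatrix e e).prod = (w.map P).prod.submatrix e e := by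
  simpa [List.map_map, Function.comp_def] using
    (map_list_prod (reindexAlgEquiv R R e.symm) (w.map P)).symm

theorem replicateRow_mul_mul_transpose_replicateRow_apply (x y : n → R) (L : Matrix n n R)
    (i j : ι) : (replicateRow ι x * L * (replicateRow ι y)ᵀ) i j = x ᵥ* L ⬝ᵥ y := by
  rw [transpose_replicateRow, ← replicateRow_vecMul, replicateRow_mul_replicateCol_apply]

end CommSemiring

section StarRing

variable [CommSemiring R] [StarRing R]

theorem isHermitian_superop [Fintype ι] {Q : ι → Matrix n n R}
    (hQ : ∀ j, (Q j).IsHermitian) : (superop Q).IsHermitian :=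
  isSelfAdjoint_sum _ fun j _ => by
    rw [IsSelfAdjoint, star_eq_conjTranspose, conjTranspose_kronecker,
      conjTranspose_transpose_eq_transpose_conjTranspose, (hQ j).eq]

theorem IsHermitian.sum_mul_mul_self [Fintype ι] [Fintype n] {Q : ι → Matrix n n R}
    (hQ : ∀ j, (Q j).IsHermitian) {X : Matrix n n R} (hX : X.IsHermitian) :
    (∑ j, Q j * X * Q j).IsHermitian :=
  isSelfAdjoint_sum _ fun j _ => by
    simpa only [(hQ j).eq] using (isHermitian_mul_mul_conjTranspose (Q j) hX).isSelfAdjoint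

theorem IsHermitian.foldl_sum_mul_mul_self [Fintype n] {σ : Type*} {ι : σ → Type*}
    [∀ c, Fintype (ι c)] {Q : (c : σ) → ι c → Matrix n n R} (hQ : ∀ c j, (Q c j).IsHermitian)
    (w : List σ) {X : Matrix n n R} (hX : X.IsHermitian) :
    (w.foldl (fun X c => ∑ j, Q c j * X * Q c j) X).IsHermitian := by
  induction w generalizing X with
  | nil => exact hX
  | cons c w ih => exact ih (hX.sum_mul_mul_self (hQ c))

end StarRing

theorem trace_eq_sum_normSq_vec [Fintype n] {B : Matrix n n ℂ} (hB : B.IsHermitian)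
    (hBB : IsIdempotentElem B) : B.trace = ((∑ p, Complex.normSq (vec B p) : ℝ) : ℂ) :=
  calc B.trace = (Bᴴ * B).trace := by rw [hB.eq, hBB.eq]
    _ = star (vec B) ⬝ᵥ vec B := (star_vec_dotProduct_vec B B).symm
    _ = _ := by push_cast [Complex.normSq_eq_conj_mul_self]; rfl

theorem sum_normSq_vec_sum_le_card [Fintype ι] [Fintype n] [DecidableEq n]
    {Q : ι → Matrix n n ℂ} (hQ : CompleteOrthogonalIdempotents Q)
    (hQh : ∀ j, (Q j).IsHermitian) (s : Finset ι) :
    ∑ p, Complex.normSq (vec (∑ j ∈ s, Q j) p) ≤ Fintype.card n := by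
  have htrace (t : Finset ι) :
      (∑ j ∈ t, Q j).trace = ((∑ j ∈ t, ∑ p, Complex.normSq (vec (Q j) p) : ℝ) : ℂ) := by
    rw [trace_sum, Complex.ofReal_sum]
    exact Finset.sum_congr rfl fun j _ => trace_eq_sum_normSq_vec (hQh j) (hQ.idem j)
  have hs : ∑ p, Complex.normSq (vec (∑ j ∈ s, Q j) p) =
      ∑ j ∈ s, ∑ p, Complex.normSq (vec (Q j) p) := by
    exact_mod_cast (trace_eq_sum_normSq_vec (isSelfAdjoint_sum s fun j _ => hQh j)
      hQ.isIdempotentElem_sum).symm.trans (htrace s)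
  have huniv : ∑ j, ∑ p, Complex.normSq (vec (Q j) p) = Fintype.card n := by
    have h := (htrace Finset.univ).symm.trans (congrArg trace hQ.complete)
    rw [trace_one] at h
    exact_mod_cast h
  rw [hs, ← huniv]
  exact Finset.sum_le_sum_of_subset_of_nonneg (Finset.subset_univ s)
    fun j _ _ => Finset.sum_nonneg fun p _ => Complex.normSq_nonneg _

end Matrix

namespace MOnQFA

variable {σ : Type} {A : MOnQFA σ}

theorem Valid.isHermitian (hA : A.Valid) (c : Option σ) (j : Fin (A.k c)) :
    (A.P c j).IsHermitian :=
  hA.2.1 c j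

theorem Valid.completeOrthogonalIdempotents (hA : A.Valid) (c : Option σ) :
    CompleteOrthogonalIdempotents (A.P c) :=
  ⟨⟨hA.2.2.1 c, fun _ _ h => hA.2.2.2.1 c _ _ h⟩, hA.2.2.2.2.1 c⟩

theorem Valid.init_mul_conjTranspose (hA : A.Valid) : A.init * A.initᴴ = 1 := by
  ext i j
  fin_cases i; fin_cases j
  simpa [mul_apply, Complex.mul_conj] using congrArg Complex.ofReal hA.2.2.2.2.2

def accProj (A : MOnQFA σ) : Matrix (Fin A.m) (Fin A.m) ℂ :=
  ∑ j ∈ A.F, A.P none j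

theorem Valid.isHermitian_accProj (hA : A.Valid) : A.accProj.IsHermitian :=
  isSelfAdjoint_sum _ fun j _ => hA.isHermitian none j

theorem Valid.isHermitian_dens (hA : A.Valid) (w : List σ) : (A.dens w).IsHermitian :=
  IsHermitian.foldl_sum_mul_mul_self (fun c => hA.isHermitian (some c)) w
    (isHermitian_conjTranspose_mul_self A.init)

theorem Valid.isIdempotentElem_dens_nil (hA : A.Valid) : IsIdempotentElem (A.dens []) := by
  change A.initᴴ * A.init * (A.initᴴ * A.init) = A.initᴴ * A.init
  rw [Matrix.mul_assoc, ← Matrix.mul_assoc A.init, hA.init_mul_conjTranspose, Matrix.one_mul]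

theorem Valid.trace_dens_nil (hA : A.Valid) : (A.dens []).trace = 1 := by
  change (A.initᴴ * A.init).trace = 1
  rw [trace_mul_comm, hA.init_mul_conjTranspose, trace_one, Fintype.card_fin, Nat.cast_one]

theorem Valid.prob_eq_trace (hA : A.Valid) (w : List σ) :
    (A.prob w : ℂ) = (A.accProj * A.dens w).trace := by
  have htrace : (∑ j ∈ A.F, A.P none j * A.dens w * A.P none j).trace =
      (A.accProj * A.dens w).trace := by
    rw [accProj, Finset.sum_mul, trace_sum, trace_sum]
    refine Finset.sum_congr rfl fun j _ => ?_
    rw [trace_mul_cycle, ((hA.completeOrthogonalIdempotents none).idem j).eq, trace_mul_comm]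
  have hreal : star (A.accProj * A.dens w).trace = (A.accProj * A.dens w).trace := by
    rw [← trace_conjTranspose, conjTranspose_mul, (hA.isHermitian_dens w).eq,
      hA.isHermitian_accProj.eq, trace_mul_comm]
  rw [prob, htrace]
  exact Complex.conj_eq_iff_re.mp hreal

theorem Valid.sum_normSq_vec_dens_nil (hA : A.Valid) :
    ∑ p, Complex.normSq (vec (A.dens []) p) = 1 := by
  exact_mod_cast ((trace_eq_sum_normSq_vec (hA.isHermitian_dens [])
    hA.isIdempotentElem_dens_nil).symm.trans hA.trace_dens_nil)

theorem Valid.sum_normSq_vec_transpose_accProj_le (hA : A.Valid) :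
    ∑ p, Complex.normSq (vec A.accProjᵀ p) ≤ A.m :=
  calc ∑ p, Complex.normSq (vec A.accProjᵀ p) = ∑ p, Complex.normSq (vec A.accProj p) :=
        Equiv.sum_comp (Equiv.prodComm _ _) fun p => Complex.normSq (vec A.accProj p)
    _ ≤ Fintype.card (Fin A.m) :=
        sum_normSq_vec_sum_le_card (hA.completeOrthogonalIdempotents none)
          (hA.isHermitian none) A.F
    _ = A.m := by rw [Fintype.card_fin]

theorem Valid.vec_vecMul_dotProduct_eq_prob (hA : A.Valid) (w : List σ) :
    vec (A.dens []) ᵥ* (w.map fun c => superop (A.P (some c))).prod ⬝ᵥ vec A.accProjᵀ =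
      A.prob w := by
  rw [vec_vecMul_prod_map_superop, vec_dotProduct_vec, hA.prob_eq_trace, ← transpose_mul,
    trace_transpose]
  rfl

end MOnQFA

theorem exists_linear_representation
    (σ : Type) (A : MOnQFA σ) (hA : A.Valid) :
    ∃ (ξ η : Matrix (Fin 1) (Fin (A.m ^ 2)) ℂ)
      (P : σ → Matrix (Fin (A.m ^ 2)) (Fin (A.m ^ 2)) ℂ),
      (∑ i, Complex.normSq (ξ 0 i)) = 1 ∧
      (∑ i, Complex.normSq (η 0 i)) ≤ (A.m : ℝ) ∧
      (∀ c, (P c)ᴴ = P c ∧ P c * P c = P c) ∧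
      (∀ w : List σ, (ξ * (w.map P).prod * η.transpose) 0 0 = (A.prob w : ℂ)) := by
  let e : Fin (A.m ^ 2) ≃ Fin A.m × Fin A.m :=
    (finCongr (pow_two A.m)).trans finProdFinEquiv.symm
  refine ⟨replicateRow _ (vec (A.dens []) ∘ e), replicateRow _ (vec A.accProjᵀ ∘ e),
    fun c => (superop (A.P (some c))).submatrix e e, ?_, ?_, fun c => ⟨?_, ?_⟩, fun w => ?_⟩
  · exact (e.sum_comp fun p => Complex.normSq (vec (A.dens []) p)).trans
      hA.sum_normSq_vec_dens_nil
  · exact (e.sum_comp fun p => Complex.normSq (vec A.accProjᵀ p)).trans_le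
      hA.sum_normSq_vec_transpose_accProj_le
  · rw [conjTranspose_submatrix, (isHermitian_superop (hA.isHermitian (some c))).eq]
  · rw [submatrix_mul_equiv, (isIdempotentElem_superop
      (hA.completeOrthogonalIdempotents (some c)).toOrthogonalIdempotents).eq]
  · rw [replicateRow_mul_mul_transpose_replicateRow_apply, list_prod_map_submatrix_equiv,
      submatrix_vecMul_equiv, Function.comp_assoc, e.self_comp_symm, Function.comp_id,
      comp_equiv_dotProduct_comp_equiv, hA.vec_vecMul_dotProduct_eq_prob]
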